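/- Let g = T_φ(g_1, B_1, g_2) be the double extension of a quadratic Lie algebra (g_1,B_1) by a Lie algebra g_2 via φ: g_2 → Der(g_1,B_1), and let γ be any invariant symmetric bilinear form on g_2. Then the bilinear form B_γ on g defined by B_γ(x_2+x_1+f, y_2+y_1+h) = γ(x_2,y_2) + B_1(x_1,y_1) + f(y_2) + h(x_2) is a nondegenerate, symmetric, invariant bilinear form on g. -/

import Mathlib

section
variable {K : Type*} [Field K] [CharZero K]
  {L₁ : Type*} [LieRing L₁] [LieAlgebra K L₁]
  {L₂ : Type*} [LieRing L₂] [LieAlgebra K L₂]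

/-- The bracket of the double extension `T_φ(g₁,B₁,g₂)` on `g₂ × g₁ × g₂^*`. -/
noncomputable def doubleExtBracket (B₁ : LinearMap.BilinForm K L₁)
    (φ : L₂ →ₗ[K] Module.End K L₁)
    (x y : L₂ × L₁ × Module.Dual K L₂) : L₂ × L₁ × Module.Dual K L₂ :=
  (⁅x.1, y.1⁆,
   ⁅x.2.1, y.2.1⁆ + φ x.1 y.2.1 - φ y.1 x.2.1,
   x.2.2.comp (LieAlgebra.ad K L₂ y.1)
     - y.2.2.comp (LieAlgebra.ad K L₂ x.1)
     + (B₁.flip y.2.1).comp ((LinearMap.applyₗ x.2.1).comp φ))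

/-- The bilinear form `B_γ` on the double extension:
`B_γ(x₂+x₁+f, y₂+y₁+h) = γ(x₂,y₂) + B₁(x₁,y₁) + f(y₂) + h(x₂)`. -/
noncomputable def doubleExtForm (B₁ : LinearMap.BilinForm K L₁)
    (γ : LinearMap.BilinForm K L₂)
    (x y : L₂ × L₁ × Module.Dual K L₂) : K :=
  γ x.1 y.1 + B₁ x.2.1 y.2.1 + x.2.2 y.1 + y.2.2 x.1

end

section DoubleExtension

variable {K : Type*} [Field K]
  {L₁ : Type*} [LieRing L₁] [LieAlgebra K L₁]
  {L₂ : Type*} [LieRing L₂] [LieAlgebra K L₂]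
  (B₁ : LinearMap.BilinForm K L₁) (γ : LinearMap.BilinForm K L₂)
  (φ : L₂ →ₗ[K] Module.End K L₁)

lemma doubleExtBracket_snd_snd_apply (X Y : L₂ × L₁ × Module.Dual K L₂) (z : L₂) :
    (doubleExtBracket B₁ φ X Y).2.2 z
      = X.2.2 ⁅Y.1, z⁆ - Y.2.2 ⁅X.1, z⁆ + B₁ (φ z X.2.1) Y.2.1 :=
  rfl

lemma doubleExtForm_comm (hsymm : ∀ x y : L₁, B₁ x y = B₁ y x)
    (hγsymm : ∀ x y : L₂, γ x y = γ y x) (X Y : L₂ × L₁ × Module.Dual K L₂) :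
    doubleExtForm B₁ γ X Y = doubleExtForm B₁ γ Y X := by
  simp only [doubleExtForm, hsymm X.2.1, hγsymm X.1]
  ring

-- The `φ`-terms cancel against the cocycle `ψ` because each `φ z` is `B₁`-skew.
lemma doubleExtForm_doubleExtBracket_invariant
    (hinv : ∀ x y z : L₁, B₁ ⁅x, y⁆ z = B₁ x ⁅y, z⁆)
    (hφskew : ∀ z : L₂, ∀ a b : L₁, B₁ (φ z a) b = - B₁ a (φ z b))
    (hγinv : ∀ x y z : L₂, γ ⁅x, y⁆ z = γ x ⁅y, z⁆) (X Y Z : L₂ × L₁ × Module.Dual K L₂) :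
    doubleExtForm B₁ γ (doubleExtBracket B₁ φ X Y) Z
      = doubleExtForm B₁ γ X (doubleExtBracket B₁ φ Y Z) := by
  obtain ⟨x₂, x₁, f⟩ := X
  obtain ⟨y₂, y₁, g⟩ := Y
  obtain ⟨z₂, z₁, k⟩ := Z
  simp only [doubleExtForm, doubleExtBracket_snd_snd_apply]
  simp only [doubleExtBracket, map_add, map_sub, LinearMap.add_apply, LinearMap.sub_apply]
  have hg : g ⁅x₂, z₂⁆ = - g ⁅z₂, x₂⁆ := by rw [← lie_skew, map_neg]
  have hk : k ⁅x₂, y₂⁆ = - k ⁅y₂, x₂⁆ := by rw [← lie_skew, map_neg]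
  linear_combination hγinv x₂ y₂ z₂ + hinv x₁ y₁ z₁ - hφskew y₂ x₁ z₁ + hφskew z₂ x₁ y₁
    - hg + hk

lemma eq_zero_of_forall_doubleExtForm_eq_zero (hB : B₁.SeparatingLeft)
    {X : L₂ × L₁ × Module.Dual K L₂} (hX : ∀ Y, doubleExtForm B₁ γ X Y = 0) : X = 0 := by
  obtain ⟨x₂, x₁, f⟩ := X
  have hx₁ : x₁ = 0 := hB x₁ fun y₁ ↦ by simpa [doubleExtForm] using hX (0, y₁, 0)
  have hx₂ : x₂ = 0 := (Module.forall_dual_apply_eq_zero_iff K x₂).mp fun h ↦ by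
    simpa [doubleExtForm] using hX (0, 0, h)
  have hf : f = 0 := LinearMap.ext fun y₂ ↦ by
    simpa [doubleExtForm, hx₂] using hX (y₂, 0, 0)
  simp [hx₁, hx₂, hf]

end DoubleExtension

section
variable {K : Type*} [Field K] [CharZero K]
  {L₁ : Type*} [LieRing L₁] [LieAlgebra K L₁]
  {L₂ : Type*} [LieRing L₂] [LieAlgebra K L₂]

theorem doubleExtForm_symm_invariant_nondegenerate_general
    (B₁ : LinearMap.BilinForm K L₁)
    (hB : B₁.Nondegenerate)
    (hsymm : ∀ x y : L₁, B₁ x y = B₁ y x)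
    (hinv : ∀ x y z : L₁, B₁ ⁅x, y⁆ z = B₁ x ⁅y, z⁆)
    (φ : L₂ →ₗ[K] Module.End K L₁)
    (hφskew : ∀ z : L₂, ∀ a b : L₁, B₁ (φ z a) b = - B₁ a (φ z b))
    (γ : LinearMap.BilinForm K L₂)
    (hγsymm : ∀ x y : L₂, γ x y = γ y x)
    (hγinv : ∀ x y z : L₂, γ ⁅x, y⁆ z = γ x ⁅y, z⁆) :
    (∀ X Y : L₂ × L₁ × Module.Dual K L₂,
        doubleExtForm B₁ γ X Y = doubleExtForm B₁ γ Y X) ∧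
    (∀ X Y Z : L₂ × L₁ × Module.Dual K L₂,
        doubleExtForm B₁ γ (doubleExtBracket B₁ φ X Y) Z
          = doubleExtForm B₁ γ X (doubleExtBracket B₁ φ Y Z)) ∧
    (∀ X : L₂ × L₁ × Module.Dual K L₂,
        (∀ Y, doubleExtForm B₁ γ X Y = 0) → X = 0) :=
  ⟨doubleExtForm_comm B₁ γ hsymm hγsymm,
   doubleExtForm_doubleExtBracket_invariant B₁ γ φ hinv hφskew hγinv,
   fun _ ↦ eq_zero_of_forall_doubleExtForm_eq_zero B₁ γ hB.1⟩

/-- On the double extension `T_φ(g₁,B₁,g₂)`, for any invariant symmetric bilinear form `γ`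
on `g₂`, the form `B_γ` is symmetric, invariant and nondegenerate. -/
theorem doubleExtForm_symm_invariant_nondegenerate
    (B₁ : LinearMap.BilinForm K L₁)
    (hB : B₁.Nondegenerate)
    (hsymm : ∀ x y : L₁, B₁ x y = B₁ y x)
    (hinv : ∀ x y z : L₁, B₁ ⁅x, y⁆ z = B₁ x ⁅y, z⁆)
    (φ : L₂ →ₗ[K] Module.End K L₁)
    (hφder : ∀ z : L₂, ∀ a b : L₁, φ z ⁅a, b⁆ = ⁅φ z a, b⁆ + ⁅a, φ z b⁆)
    (hφskew : ∀ z : L₂, ∀ a b : L₁, B₁ (φ z a) b = - B₁ a (φ z b))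
    (hφhom : ∀ w z : L₂, φ ⁅w, z⁆ = φ w * φ z - φ z * φ w)
    (γ : LinearMap.BilinForm K L₂)
    (hγsymm : ∀ x y : L₂, γ x y = γ y x)
    (hγinv : ∀ x y z : L₂, γ ⁅x, y⁆ z = γ x ⁅y, z⁆) :
    (∀ X Y : L₂ × L₁ × Module.Dual K L₂,
        doubleExtForm B₁ γ X Y = doubleExtForm B₁ γ Y X) ∧
    (∀ X Y Z : L₂ × L₁ × Module.Dual K L₂,
        doubleExtForm B₁ γ (doubleExtBracket B₁ φ X Y) Z
          = doubleExtForm B₁ γ X (doubleExtBracket B₁ φ Y Z)) ∧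
    (∀ X : L₂ × L₁ × Module.Dual K L₂,
        (∀ Y, doubleExtForm B₁ γ X Y = 0) → X = 0) :=
  doubleExtForm_symm_invariant_nondegenerate_general B₁ hB hsymm hinv φ hφskew γ hγsymm hγinv

end
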